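/- Let S be an inverse monoid, A a semilattice of abelian groups with S-module structure (α,λ). Then H⁰(S, A) is isomorphic to the group {a ∈ U(A) : λ_s(a) a⁻¹ = α(s s⁻¹) for all s ∈ S}, where U(A) is the group of units of A (the group component at the identity idempotent). Equivalently, this group is isomorphic to the group of functions f : E(S) → A with f(e) ∈ A_{α(e)} and λ_s(f(e)) = f(s e s⁻¹) for all s, e. -/
import Mathlib


/-- An inverse semigroup: every element has a unique (generalized) inverse. -/
class InverseSemigroup (S : Type*) extends Semigroup S, Inv S where
  mul_inv_mul : ∀ a : S, a * a⁻¹ * a = a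
  inv_mul_inv : ∀ a : S, a⁻¹ * a * a⁻¹ = a⁻¹
  inv_unique : ∀ a b : S, a * b * a = a → b * a * b = b → b = a⁻¹

/-- `e` is an idempotent. -/
def IsIdem {S : Type*} [Mul S] (e : S) : Prop := e * e = e

/-- The natural partial order on an inverse semigroup: `a ≤ b` iff `a = e * b`
for some idempotent `e`. -/
def NatLe {S : Type*} [Mul S] (a b : S) : Prop := ∃ e, IsIdem e ∧ a = e * b

/-- An `S`-module structure `(α, λ)` on a semilattice of abelian groups `A`
(modelled as a commutative inverse semigroup): `α` is an isomorphism
`E(S) → E(A)` and `lam` is a homomorphism of `S` into endomorphisms of `A`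
satisfying `λ_e(a) = α(e)a` and `λ_s(α(e)) = α(s e s⁻¹)`. -/
structure SMod (S A : Type*) [InverseSemigroup S] [InverseSemigroup A] where
  α : S → A
  lam : S → A → A
  α_idem : ∀ e : S, IsIdem e → IsIdem (α e)
  α_mul : ∀ e f : S, IsIdem e → IsIdem f → α (e * f) = α e * α f
  α_inj : ∀ e f : S, IsIdem e → IsIdem f → α e = α f → e = f
  α_surj : ∀ g : A, IsIdem g → ∃ e : S, IsIdem e ∧ α e = g
  lam_mul : ∀ (s : S) (a b : A), lam s (a * b) = lam s a * lam s b
  lam_idem : ∀ e : S, IsIdem e → ∀ a : A, lam e a = α e * a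
  lam_alpha : ∀ (s e : S), IsIdem e → lam s (α e) = α (s * e * s⁻¹)
  lam_comp : ∀ (s t : S) (a : A), lam s (lam t a) = lam (s * t) a

/-- The group of invariant units: `{a ∈ U(A) : λ_s(a)a⁻¹ = α(ss⁻¹) for all s}`. -/
abbrev H0a {S A : Type*} [InverseSemigroup S] [InverseSemigroup A]
    (M : SMod S A) (one : S) : Type _ :=
  {a : A // a * a⁻¹ = M.α one ∧ ∀ s : S, M.lam s a * a⁻¹ = M.α (s * s⁻¹)}

/-- The group of functions `f : E(S) → A` with `f(e) ∈ A_{α(e)}` and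
`λ_s(f(e)) = f(s e s⁻¹)`. -/
abbrev H0f {S A : Type*} [InverseSemigroup S] [InverseSemigroup A]
    (M : SMod S A) : Type _ :=
  {f : {e : S // IsIdem e} → A //
    (∀ e : {e : S // IsIdem e}, f e * (f e)⁻¹ = M.α e.1) ∧
    (∀ (s : S) (e e' : {e : S // IsIdem e}), e'.1 = s * e.1 * s⁻¹ →
      M.lam s (f e) = f e')}


section Aux
variable {S A : Type*} [InverseSemigroup S] [InverseSemigroup A]

lemma idem_inv_eq {e : S} (he : IsIdem e) : e⁻¹ = e :=
  (InverseSemigroup.inv_unique e e (by rw [he, he]) (by rw [he, he])).symm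

lemma mul_inv_comm (hA : ∀ a b : A, a * b = b * a) (x y : A) :
    (x * y)⁻¹ = x⁻¹ * y⁻¹ := by
  letI : CommSemigroup A := { mul_comm := hA }
  symm
  apply InverseSemigroup.inv_unique
  · have h : x * y * (x⁻¹ * y⁻¹) * (x * y) = (x * x⁻¹ * x) * (y * y⁻¹ * y) := by ac_rfl
    rw [h, InverseSemigroup.mul_inv_mul, InverseSemigroup.mul_inv_mul]
  · have h : x⁻¹ * y⁻¹ * (x * y) * (x⁻¹ * y⁻¹) = (x⁻¹ * x * x⁻¹) * (y⁻¹ * y * y⁻¹) := by ac_rfl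
    rw [h, InverseSemigroup.inv_mul_inv, InverseSemigroup.inv_mul_inv]

lemma idem_mul_inv (s : S) : IsIdem (s * s⁻¹) := by
  show s * s⁻¹ * (s * s⁻¹) = s * s⁻¹
  rw [← mul_assoc, InverseSemigroup.mul_inv_mul]

end Aux

/-- For an inverse monoid `S`, `H⁰(S,A)` (the group of invariant units
`{a ∈ U(A) : λ_s(a)a⁻¹ = α(ss⁻¹)}`) is isomorphic, via a multiplicative
bijection, to the group of functions `f : E(S) → A` with `f(e) ∈ A_{α(e)}` and
`λ_s(f(e)) = f(ses⁻¹)`. -/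
theorem stmt11 {S A : Type*} [InverseSemigroup S] [InverseSemigroup A]
    (hA : ∀ a b : A, a * b = b * a) (M : SMod S A)
    (one : S) (hone : ∀ s : S, one * s = s ∧ s * one = s) :
    ∃ Φ : H0a M one ≃ H0f M,
      ∀ x y z : H0a M one, z.1 = x.1 * y.1 →
        ∀ e : {e : S // IsIdem e}, (Φ z).1 e = (Φ x).1 e * (Φ y).1 e := by
  letI : CommSemigroup A := { mul_comm := hA }
  have hone1 : IsIdem one := (hone one).1
  -- key fact: for a in H0a, lam s a = α (s s⁻¹) * a
  have key : ∀ (a : A), a * a⁻¹ = M.α one →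
      (∀ s : S, M.lam s a * a⁻¹ = M.α (s * s⁻¹)) →
      ∀ s : S, M.lam s a = M.α (s * s⁻¹) * a := by
    intro a h1 h2 s
    have h3 : M.lam s a = M.α one * M.lam s a := by
      conv_lhs => rw [← (hone s).1, ← M.lam_comp, M.lam_idem one hone1]
    calc M.lam s a = M.α one * M.lam s a := h3
      _ = a * a⁻¹ * M.lam s a := by rw [h1]
      _ = (M.lam s a * a⁻¹) * a := by ac_rfl
      _ = M.α (s * s⁻¹) * a := by rw [h2 s]
  -- forward map
  have fwd : ∀ a : H0a M one, (∀ e : {e : S // IsIdem e},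
        (M.α e.1 * a.1) * (M.α e.1 * a.1)⁻¹ = M.α e.1) ∧
      (∀ (s : S) (e e' : {e : S // IsIdem e}), e'.1 = s * e.1 * s⁻¹ →
        M.lam s (M.α e.1 * a.1) = M.α e'.1 * a.1) := by
    intro ⟨a, h1, h2⟩
    constructor
    · intro ⟨e, he⟩
      have hae : IsIdem (M.α e) := M.α_idem e he
      rw [mul_inv_comm hA, idem_inv_eq hae]
      calc M.α e * a * (M.α e * a⁻¹) = (M.α e * M.α e) * (a * a⁻¹) := by ac_rfl
        _ = M.α e * M.α one := by rw [hae, h1]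
        _ = M.α (e * one) := (M.α_mul e one he hone1).symm
        _ = M.α e := by rw [(hone e).2]
    · intro s ⟨e, he⟩ ⟨e', he'⟩ hee'
      simp only at hee' ⊢
      subst hee'
      have hss : IsIdem (s * s⁻¹) := idem_mul_inv s
      rw [M.lam_mul, M.lam_alpha s e he, key a h1 h2 s, ← mul_assoc,
        ← M.α_mul _ _ he' hss]
      congr 2
      calc s * e * s⁻¹ * (s * s⁻¹) = s * e * (s⁻¹ * s * s⁻¹) := by
            simp only [mul_assoc]
        _ = s * e * s⁻¹ := by rw [InverseSemigroup.inv_mul_inv]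
  -- every f in H0f satisfies f e = α e * f 1
  have bwd : ∀ f : H0f M, ∀ e : {e : S // IsIdem e},
      f.1 e = M.α e.1 * f.1 ⟨one, hone1⟩ := by
    intro ⟨f, h1, h2⟩ ⟨e, he⟩
    simp only
    have h3 := h2 e ⟨one, hone1⟩ ⟨e, he⟩ (by
      simp only
      rw [(hone e).2, idem_inv_eq he, he])
    rw [← h3, M.lam_idem e he]
  have bwd_mem : ∀ f : H0f M,
      f.1 ⟨one, hone1⟩ * (f.1 ⟨one, hone1⟩)⁻¹ = M.α one ∧
      ∀ s : S, M.lam s (f.1 ⟨one, hone1⟩) * (f.1 ⟨one, hone1⟩)⁻¹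
        = M.α (s * s⁻¹) := by
    intro f
    refine ⟨f.2.1 ⟨one, hone1⟩, fun s => ?_⟩
    have hss : IsIdem (s * s⁻¹) := idem_mul_inv s
    have h3 := f.2.2 s ⟨one, hone1⟩ ⟨s * s⁻¹, hss⟩ (by simp only; rw [(hone s).2])
    rw [h3, bwd f ⟨s * s⁻¹, hss⟩, mul_assoc, f.2.1 ⟨one, hone1⟩,
      ← M.α_mul _ _ hss hone1, (hone (s * s⁻¹)).2]
  refine ⟨{
    toFun := fun a => ⟨fun e => M.α e.1 * a.1, fwd a⟩
    invFun := fun f => ⟨f.1 ⟨one, hone1⟩, bwd_mem f⟩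
    left_inv := ?_
    right_inv := ?_ }, ?_⟩
  · intro ⟨a, h1, h2⟩
    apply Subtype.ext
    show M.α one * a = a
    rw [← h1, InverseSemigroup.mul_inv_mul]
  · intro f
    apply Subtype.ext
    funext e
    exact (bwd f e).symm
  · intro x y z hz e
    show M.α e.1 * z.1 = M.α e.1 * x.1 * (M.α e.1 * y.1)
    rw [hz]
    have hae : IsIdem (M.α e.1) := M.α_idem e.1 e.2
    calc M.α e.1 * (x.1 * y.1) = (M.α e.1 * M.α e.1) * (x.1 * y.1) := by rw [hae]
      _ = M.α e.1 * x.1 * (M.α e.1 * y.1) := by ac_rfl
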